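/- For every binary bracketing s with occurrence number n and insertion tuple u = ST(s), the leftmost-leaf depth satisfies d_l(s) = |{ q ∈ {1,…,n} : u_q = 1 }| and the rightmost-leaf depth satisfies d_r(s) = |{ q ∈ {1,…,n} : u_q = q }|. -/

import Mathlib

/-- p-ary bracketings: terms over one variable `x` with one p-ary operation symbol `ω`. -/
inductive Brack (p : ℕ) : Type
  | x : Brack p
  | node : (Fin p → Brack p) → Brack p

namespace Brack

/-- occurrence number: number of occurrences of ω -/
def occ {p : ℕ} : Brack p → ℕ
  | .x => 0
  | .node f => 1 + ∑ i, occ (f i)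

/-- length: number of occurrences of x -/
def len {p : ℕ} : Brack p → ℕ
  | .x => 1
  | .node f => ∑ i, len (f i)

/-- evaluation of a bracketing in a groupoid, variables enumerated left-to-right
starting at position `j`. -/
def evalFrom {p : ℕ} {A : Type*} (op : (Fin p → A) → A) (v : ℕ → A) :
    Brack p → ℕ → A
  | .x, j => v j
  | .node f, j =>
      op (fun i => evalFrom op v (f i)
        (j + ∑ k ∈ Finset.univ.filter (· < i), len (f k)))

/-- the term function induced by a bracketing -/
def eval {p : ℕ} {A : Type*} (op : (Fin p → A) → A) (t : Brack p) (v : ℕ → A) : A :=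
  evalFrom op v t 0

/-- prefix word of a bracketing: `true` codes ω, `false` codes x -/
def word {p : ℕ} : Brack p → List Bool
  | .x => [false]
  | .node f => true :: (List.ofFn (fun i => word (f i))).flatten

/-- auxiliary: scan a word, recording 1 + number of x's before each ω -/
def STaux : List Bool → ℕ → List ℕ
  | [], _ => []
  | true :: w, c => (c + 1) :: STaux w c
  | false :: w, c => STaux w (c + 1)

/-- insertion tuple of a bracketing: the i-th entry is one plus the number
of x's preceding the i-th occurrence of ω in the prefix notation -/
def ST {p : ℕ} (t : Brack p) : List ℕ := STaux (word t) 0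

/-- replace the i-th (0-based) occurrence of x in `t` by `s` -/
def replaceLeaf {p : ℕ} : Brack p → ℕ → Brack p → Brack p
  | .x, i, s => if i = 0 then s else .x
  | .node f, i, s => .node (fun j =>
      let off := ∑ k ∈ Finset.univ.filter (· < j), len (f k)
      if off ≤ i ∧ i < off + len (f j) then replaceLeaf (f j) (i - off) s else f j)

/-- β_i : insertion of ω x … x at the i-th (1-based) occurrence of x -/
def beta {p : ℕ} (i : ℕ) (t : Brack p) : Brack p :=
  replaceLeaf t (i - 1) (.node (fun _ => .x))

/-- left depth: depth of leftmost leaf (binary case) -/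
def dl : Brack 2 → ℕ
  | .x => 0
  | .node f => dl (f 0) + 1

/-- right depth: depth of rightmost leaf (binary case) -/
def dr : Brack 2 → ℕ
  | .x => 0
  | .node f => dr (f 1) + 1

/-- left factor of a binary bracketing -/
def leftF : Brack 2 → Brack 2
  | .x => .x
  | .node f => f 0

/-- whether a bracketing is the single variable x -/
def isX {p : ℕ} : Brack p → Bool
  | .x => true
  | .node _ => false

/-- number of pairs of eggs, i.e. subterm occurrences of ω x x (binary case) -/
def eggs : Brack 2 → ℕ
  | .x => 0
  | .node f => (if isX (f 0) && isX (f 1) then 1 else 0) + eggs (f 0) + eggs (f 1)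

end Brack

/-- generalized Catalan numbers -/
def genCat (p : ℕ) : ℕ → ℕ
  | 0 => 1
  | n + 1 =>
      ∑ v ∈ (Finset.Nat.antidiagonalTuple p n).attach, ∏ k : Fin p, genCat p (v.1 k)
  decreasing_by
    have hv := Finset.Nat.mem_antidiagonalTuple.mp v.2
    have hle : v.1 k ≤ n := by
      calc v.1 k ≤ ∑ i, v.1 i :=
            Finset.single_le_sum (fun i _ => Nat.zero_le _) (Finset.mem_univ k)
        _ = n := hv
    omega

/-- the set M(n,k,p) of weakly increasing n-tuples of positive integers
with u_i ≤ (p-1)(i-1)+k (here indices are 0-based) -/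
def Mset (n k p : ℕ) : Set (Fin n → ℕ) :=
  {u | (∀ i : Fin n, 1 ≤ u i ∧ u i ≤ (p - 1) * (i : ℕ) + k) ∧
    ∀ i j : Fin n, i ≤ j → u i ≤ u j}

/-!
Writing `n₁ = occ t₁`, the insertion tuple splits as
`ST (ω t₁ t₂) = 1 :: ST t₁ ++ (ST t₂ + (n₁ + 1))`. Entries of `ST` are positive and the `i`-th
entry (0-based) is at most `i + 1`, so the shifted block contains no `1` and the block `ST t₁`,
which sits one place to the right, contains no entry equal to its position. Shifting both the
entries and the positions of `ST t₂` by `n₁ + 1` preserves the entries equal to their position,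
and induction gives both formulas.
-/

namespace Brack

lemma STaux_append (w₁ w₂ : List Bool) (c : ℕ) :
    STaux (w₁ ++ w₂) c = STaux w₁ c ++ STaux w₂ (c + w₁.count false) := by
  induction w₁ generalizing c with
  | nil => simp [STaux]
  | cons b w ih =>
    cases b
    · simp only [List.cons_append, STaux, ih, List.count_cons_self]
      rw [Nat.add_assoc, Nat.add_comm 1]
    · simp [STaux, ih]

lemma STaux_add (w : List Bool) (c d : ℕ) :
    STaux w (c + d) = (STaux w c).map (· + d) := by
  induction w generalizing c with
  | nil => rfl
  | cons b w ih =>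
    cases b
    · simpa [STaux, Nat.add_right_comm c d 1] using ih (c + 1)
    · simp [STaux, ih, Nat.add_right_comm c d 1]

lemma count_false_word {p : ℕ} (t : Brack p) : (word t).count false = len t := by
  induction t with
  | x => rfl
  | node f ih => simp [word, len, List.count_flatten, List.sum_ofFn, ih]

lemma word_node (f : Fin 2 → Brack 2) :
    word (.node f) = true :: (word (f 0) ++ word (f 1)) := by
  simp [word, List.ofFn_succ]

lemma len_eq_occ_add_one (t : Brack 2) : len t = occ t + 1 := by
  induction t with
  | x => rfl
  | node f ih => simp only [len, occ, Fin.sum_univ_two, ih]; ring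

lemma ST_node (f : Fin 2 → Brack 2) :
    ST (.node f) = 1 :: (ST (f 0) ++ (ST (f 1)).map (· + (occ (f 0) + 1))) := by
  rw [ST, word_node, STaux, STaux_append, count_false_word, len_eq_occ_add_one, STaux_add]
  rfl

lemma length_ST (t : Brack 2) : (ST t).length = occ t := by
  induction t with
  | x => rfl
  | node f ih => simp only [ST_node, occ, Fin.sum_univ_two, List.length_cons,
      List.length_append, List.length_map, ih]; ring

lemma one_le_of_mem_ST {t : Brack 2} {v : ℕ} (hv : v ∈ ST t) : 1 ≤ v := by
  induction t generalizing v with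
  | x => simp [ST, word, STaux] at hv
  | node f ih =>
    simp only [ST_node, List.mem_cons, List.mem_append, List.mem_map] at hv
    rcases hv with rfl | hv | ⟨w, -, rfl⟩
    · rfl
    · exact ih 0 hv
    · omega

/-- In the prefix word, at most `i` variables precede the `(i+1)`-st `ω`. -/
lemma fst_add_le_of_mem_zipIdx_ST {t : Brack 2} {k : ℕ} {q : ℕ × ℕ}
    (hq : q ∈ (ST t).zipIdx k) : q.1 + k ≤ q.2 + 1 := by
  induction t generalizing k q with
  | x => simp [ST, word, STaux] at hq
  | node f ih =>
    simp only [ST_node, List.zipIdx_cons, List.zipIdx_append, List.zipIdx_map, length_ST,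
      List.mem_cons, List.mem_append, List.mem_map] at hq
    rcases hq with rfl | hq | ⟨⟨v, j⟩, hvj, rfl⟩
    · exact Nat.add_comm 1 k ▸ le_rfl
    · have := ih 0 hq
      omega
    · have := ih 1 (k := k + 1 + occ (f 0)) hvj
      simp only [Prod.map_fst, Prod.map_snd, id_eq]
      omega

lemma countP_zipIdx_map_add (l : List ℕ) (k d : ℕ) :
    ((l.map (· + d)).zipIdx (k + d)).countP (fun q => q.1 = q.2 + 1) =
      (l.zipIdx k).countP (fun q => q.1 = q.2 + 1) := by
  rw [List.zipIdx_map, Nat.add_comm, ← List.map_snd_add_zipIdx_eq_zipIdx, List.map_map,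
    List.countP_map]
  congr 1
  funext q
  simp only [Function.comp_apply, Prod.map_fst, Prod.map_snd, id_eq, decide_eq_decide]
  omega

lemma dl_eq_countP_ST (t : Brack 2) : dl t = (ST t).countP (fun a => a = 1) := by
  induction t with
  | x => rfl
  | node f ih =>
    have hshift : ((ST (f 1)).map (· + (occ (f 0) + 1))).countP (fun a => a = 1) = 0 :=
      List.countP_eq_zero.mpr fun a ha => by
        obtain ⟨v, hv, rfl⟩ := List.mem_map.mp ha
        have := one_le_of_mem_ST hv
        simp only [decide_eq_true_eq]
        omega
    rw [dl, ST_node, List.countP_cons, List.countP_append, hshift, ih 0]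
    rfl

lemma dr_eq_countP_zipIdx_ST (t : Brack 2) :
    dr t = (ST t).zipIdx.countP (fun q => q.1 = q.2 + 1) := by
  induction t with
  | x => rfl
  | node f ih =>
    have hleft : ((ST (f 0)).zipIdx 1).countP (fun q => q.1 = q.2 + 1) = 0 :=
      List.countP_eq_zero.mpr fun q hq => by
        have := fst_add_le_of_mem_zipIdx_ST hq
        simp only [decide_eq_true_eq]
        omega
    have hright := countP_zipIdx_map_add (ST (f 1)) 0 (occ (f 0) + 1)
    rw [Nat.zero_add] at hright
    rw [dr, ST_node, List.zipIdx_cons, List.countP_cons, List.zipIdx_append, List.countP_append,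
      hleft, length_ST, Nat.add_comm 1 (occ (f 0)), hright, ih 1]
    simp

end Brack

theorem stmt_17 (s : Brack 2) :
    Brack.dl s = (Brack.ST s).countP (fun a => a = 1) ∧
    Brack.dr s = (Brack.ST s).zipIdx.countP (fun q => q.1 = q.2 + 1) :=
  ⟨Brack.dl_eq_countP_ST s, Brack.dr_eq_countP_zipIdx_ST s⟩
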